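/- arXiv:1806.02587 — 4 statements merged into one kernel-verified Lean document; each statement's English description precedes it below -/
import Mathlib

section
/- Let Ā be an N×N real matrix, let B̄_f, B̄_h, B̄_w be real matrices with N rows, let α > 0 and β > 0 be real numbers, and set B̄ = [√2·α·B̄_f √2·β·B̄_h B̄_w] (horizontal block concatenation). Suppose P is an N×N real symmetric positive definite matrix such that (i) the block matrix [[Ā P + P Āᵀ + 4P, B̄], [B̄ᵀ, −I]] is negative semidefinite, and (ii) 4P + (2α² − 1) B̄_f B̄_fᵀ + (2β² − 1) B̄_h B̄_hᵀ + B̄_w B̄_wᵀ is positive semidefinite. Then, with S = P⁻¹, the matrix Āᵀ S + S Ā + S B̄_h B̄_hᵀ S + S B̄_f B̄_fᵀ S is negative semidefinite. -/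
/-!
A Schur complement with respect to the block `-I` turns condition (i) into
`ĀP + PĀᵀ + 4P + B̄B̄ᵀ ⪯ 0`, and `B̄B̄ᵀ = 2α² B̄_f B̄_fᵀ + 2β² B̄_h B̄_hᵀ + B̄_w B̄_wᵀ`.
Adding condition (ii) cancels `4P`, `B̄_w B̄_wᵀ` and the surplus weights, leaving
`ĀP + PĀᵀ + B̄_f B̄_fᵀ + B̄_h B̄_hᵀ ⪯ 0`; the congruence `X ↦ P⁻¹ X P⁻¹` then gives the claim.
-/

open Matrix

namespace Matrix

variable {m n k R : Type*} [Fintype m] [Fintype n]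

theorem posSemidef_neg_fromBlocks_neg_one_iff [DecidableEq n] [CommRing R] [PartialOrder R]
    [StarRing R] [StarOrderedRing R] [NoZeroDivisors R] (X : Matrix m m R) (B : Matrix m n R) :
    (-(fromBlocks X B Bᴴ (-1))).PosSemidef ↔ (-(X + B * Bᴴ)).PosSemidef := by
  have hneg : -(fromBlocks X B Bᴴ (-1)) = fromBlocks (-X) (-B) (-B)ᴴ 1 := by
    rw [fromBlocks_neg, conjTranspose_neg, neg_neg]
  let _ : Invertible (1 : Matrix n n R) := invertibleOne
  rw [hneg, PosDef.fromBlocks₂₂ (-X) (-B) PosDef.one, inv_one, Matrix.mul_one,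
    conjTranspose_neg, Matrix.neg_mul, Matrix.mul_neg, neg_neg, neg_add']

theorem fromCols_mul_transpose_fromCols [CommSemiring R] (B₁ : Matrix k m R)
    (B₂ : Matrix k n R) :
    fromCols B₁ B₂ * (fromCols B₁ B₂)ᵀ = B₁ * B₁ᵀ + B₂ * B₂ᵀ := by
  rw [transpose_fromCols, fromCols_mul_fromRows]

theorem smul_mul_transpose_smul [CommSemiring R] (c : R) (M : Matrix k m R) :
    c • M * (c • M)ᵀ = (c * c) • (M * Mᵀ) := by
  rw [transpose_smul, Matrix.smul_mul, Matrix.mul_smul, smul_smul]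

theorem PosSemidef.neg_lyapunov_inv {K : Type*} [Field K] [PartialOrder K] [StarRing K]
    [StarOrderedRing K] [DecidableEq m] {A P Q : Matrix m m K} (hP : P.PosDef)
    (h : (-(A * P + P * Aᴴ + Q)).PosSemidef) :
    (-(Aᴴ * P⁻¹ + P⁻¹ * A + P⁻¹ * Q * P⁻¹)).PosSemidef := by
  have hdet : IsUnit P.det := (isUnit_iff_isUnit_det P).mp hP.isUnit
  have hconj : P⁻¹ * (A * P + P * Aᴴ + Q) * P⁻¹ = Aᴴ * P⁻¹ + P⁻¹ * A + P⁻¹ * Q * P⁻¹ := by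
    simp only [Matrix.mul_add, Matrix.add_mul, Matrix.mul_assoc, mul_nonsing_inv P hdet,
      Matrix.mul_one, ← Matrix.mul_assoc P⁻¹ P, nonsing_inv_mul P hdet, Matrix.one_mul]
    abel
  have := h.mul_mul_conjTranspose_same P⁻¹
  rwa [hP.inv.isHermitian.eq, Matrix.mul_neg, Matrix.neg_mul, hconj] at this

end Matrix

theorem fault_tolerant_corollary_general (N p q r : ℕ)
    (A : Matrix (Fin N) (Fin N) ℝ)
    (Bf : Matrix (Fin N) (Fin p) ℝ) (Bh : Matrix (Fin N) (Fin q) ℝ)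
    (Bw : Matrix (Fin N) (Fin r) ℝ)
    (α β : ℝ)
    (P : Matrix (Fin N) (Fin N) ℝ) (hP : P.PosDef)
    (B : Matrix (Fin N) (Fin p ⊕ (Fin q ⊕ Fin r)) ℝ)
    (hB : B = fromCols ((Real.sqrt 2 * α) • Bf)
        (fromCols ((Real.sqrt 2 * β) • Bh) Bw))
    (h1 : (-(fromBlocks (A * P + P * Aᵀ + (4 : ℝ) • P) B Bᵀ
        (-(1 : Matrix (Fin p ⊕ (Fin q ⊕ Fin r)) (Fin p ⊕ (Fin q ⊕ Fin r)) ℝ)))).PosSemidef)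
    (h2 : ((4 : ℝ) • P + (2 * α ^ 2 - 1) • (Bf * Bfᵀ)
        + (2 * β ^ 2 - 1) • (Bh * Bhᵀ) + Bw * Bwᵀ).PosSemidef) :
    (-(Aᵀ * P⁻¹ + P⁻¹ * A + P⁻¹ * (Bh * Bhᵀ) * P⁻¹
        + P⁻¹ * (Bf * Bfᵀ) * P⁻¹)).PosSemidef := by
  have hsqrt (c : ℝ) : Real.sqrt 2 * c * (Real.sqrt 2 * c) = 2 * c ^ 2 := by
    rw [mul_mul_mul_comm, Real.mul_self_sqrt zero_le_two, sq]
  have hBB : B * Bᵀ = (2 * α ^ 2) • (Bf * Bfᵀ) + ((2 * β ^ 2) • (Bh * Bhᵀ) + Bw * Bwᵀ) := by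
    rw [hB, fromCols_mul_transpose_fromCols, fromCols_mul_transpose_fromCols,
      smul_mul_transpose_smul, smul_mul_transpose_smul, hsqrt, hsqrt]
  have hschur := (posSemidef_neg_fromBlocks_neg_one_iff _ B).mp
    (by simpa only [conjTranspose_eq_transpose_of_trivial] using h1)
  have hlyap : (-(A * P + P * Aᵀ + (Bh * Bhᵀ + Bf * Bfᵀ))).PosSemidef := by
    have hsum : -(A * P + P * Aᵀ + (4 : ℝ) • P + B * Bᴴ) + ((4 : ℝ) • P
        + (2 * α ^ 2 - 1) • (Bf * Bfᵀ) + (2 * β ^ 2 - 1) • (Bh * Bhᵀ) + Bw * Bwᵀ)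
        = -(A * P + P * Aᵀ + (Bh * Bhᵀ + Bf * Bfᵀ)) := by
      rw [conjTranspose_eq_transpose_of_trivial, hBB]
      module
    exact hsum ▸ hschur.add h2
  simpa only [conjTranspose_eq_transpose_of_trivial, Matrix.mul_add, Matrix.add_mul,
    ← add_assoc] using hlyap.neg_lyapunov_inv hP

/-- Corollary 1 of the paper. Suppose `P > 0` is symmetric with
`[[ĀP + PĀᵀ + 4P, B̄],[B̄ᵀ, −I]] ⪯ 0` where `B̄ = [√2·α·B̄_f  √2·β·B̄_h  B̄_w]`, and
`4P + (2α²−1) B̄_f B̄_fᵀ + (2β²−1) B̄_h B̄_hᵀ + B̄_w B̄_wᵀ ⪰ 0`. Then with `S = P⁻¹`,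
`Āᵀ S + S Ā + S B̄_h B̄_hᵀ S + S B̄_f B̄_fᵀ S ⪯ 0`. -/
theorem fault_tolerant_corollary (N p q r : ℕ)
    (A : Matrix (Fin N) (Fin N) ℝ)
    (Bf : Matrix (Fin N) (Fin p) ℝ) (Bh : Matrix (Fin N) (Fin q) ℝ)
    (Bw : Matrix (Fin N) (Fin r) ℝ)
    (α β : ℝ) (hα : 0 < α) (hβ : 0 < β)
    (P : Matrix (Fin N) (Fin N) ℝ) (hPsymm : P.IsSymm) (hP : P.PosDef)
    (B : Matrix (Fin N) (Fin p ⊕ (Fin q ⊕ Fin r)) ℝ)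
    (hB : B = fromCols ((Real.sqrt 2 * α) • Bf)
        (fromCols ((Real.sqrt 2 * β) • Bh) Bw))
    (h1 : (-(fromBlocks (A * P + P * Aᵀ + (4 : ℝ) • P) B Bᵀ
        (-(1 : Matrix (Fin p ⊕ (Fin q ⊕ Fin r)) (Fin p ⊕ (Fin q ⊕ Fin r)) ℝ)))).PosSemidef)
    (h2 : ((4 : ℝ) • P + (2 * α ^ 2 - 1) • (Bf * Bfᵀ)
        + (2 * β ^ 2 - 1) • (Bh * Bhᵀ) + Bw * Bwᵀ).PosSemidef) :
    (-(Aᵀ * P⁻¹ + P⁻¹ * A + P⁻¹ * (Bh * Bhᵀ) * P⁻¹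
        + P⁻¹ * (Bf * Bfᵀ) * P⁻¹)).PosSemidef :=
  fault_tolerant_corollary_general N p q r A Bf Bh Bw α β P hP B hB h1 h2
end

section
/- Let A be an N×N real matrix and let Γ : [0, ∞) → (N×N real symmetric matrices) be a differentiable matrix-valued function satisfying the differential matrix inequality Γ′(t) ⪰ A Γ(t) + Γ(t) Aᵀ (i.e., Γ′(t) − A Γ(t) − Γ(t) Aᵀ is positive semidefinite) for all t ≥ 0. Then for all t ≥ 0, Γ(t) ⪰ exp(t A) Γ(0) exp(t Aᵀ), i.e., Γ(t) − exp(t A) Γ(0) exp(t A)ᵀ is positive semidefinite. -/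
/-!
Fix `t ≥ 0` and `x`, and transport `x` backwards along the adjoint flow:
`y(s) = exp((t - s) Aᵀ) x`. Since `y' = -Aᵀ y`, the function `s ↦ y(s)ᵀ Γ(s) y(s)` has derivative
`y(s)ᵀ (Γ'(s) - A Γ(s) - Γ(s) Aᵀ) y(s) ≥ 0`, so it is monotone; its values at `s = 0` and `s = t`
are `xᵀ exp(tA) Γ(0) exp(tA)ᵀ x` and `xᵀ Γ(t) x`.
-/

open Matrix Set NormedSpace

section

variable {m n : Type*} [Fintype n] {S : Set ℝ} {s : ℝ}

theorem hasDerivWithinAt_dotProduct {v w : ℝ → n → ℝ} {v' w' : n → ℝ}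
    (hv : ∀ i, HasDerivWithinAt (fun u => v u i) (v' i) S s)
    (hw : ∀ i, HasDerivWithinAt (fun u => w u i) (w' i) S s) :
    HasDerivWithinAt (fun u => v u ⬝ᵥ w u) (v' ⬝ᵥ w s + v s ⬝ᵥ w') S s := by
  simp only [dotProduct, ← Finset.sum_add_distrib]
  exact HasDerivWithinAt.fun_sum fun i _ => (hv i).mul (hw i)

theorem hasDerivWithinAt_mulVec {M : ℝ → Matrix m n ℝ} {M' : Matrix m n ℝ}
    {v : ℝ → n → ℝ} {v' : n → ℝ}
    (hM : ∀ i j, HasDerivWithinAt (fun u => M u i j) (M' i j) S s)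
    (hv : ∀ i, HasDerivWithinAt (fun u => v u i) (v' i) S s) (i : m) :
    HasDerivWithinAt (fun u => (M u *ᵥ v u) i) ((M' *ᵥ v s + M s *ᵥ v') i) S s :=
  hasDerivWithinAt_dotProduct (hM i) hv

theorem hasDerivAt_exp_smul_apply [DecidableEq n] (B : Matrix n n ℝ) (i j : n) (s : ℝ) :
    HasDerivAt (fun u : ℝ => exp (u • B) i j) ((B * exp (s • B)) i j) s := by
  -- `exp` and the entries do not depend on the norm; any Banach-algebra norm gives the derivative.
  let : NormedRing (Matrix n n ℝ) := Matrix.linftyOpNormedRing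
  let : NormedAlgebra ℝ (Matrix n n ℝ) := Matrix.linftyOpNormedAlgebra
  exact (entryLinearMap ℝ ℝ i j).toContinuousLinearMap.hasFDerivAt.comp_hasDerivAt s
    (hasDerivAt_exp_smul_const' B s)

theorem hasDerivAt_exp_sub_smul_mulVec_apply [DecidableEq n] (B : Matrix n n ℝ) (t : ℝ)
    (x : n → ℝ) (s : ℝ) (i : n) :
    HasDerivAt (fun u => (exp ((t - u) • B) *ᵥ x) i)
      (-(B *ᵥ (exp ((t - s) • B) *ᵥ x)) i) s := by
  have hexp : ∀ j k, HasDerivAt (fun u => exp ((t - u) • B) j k)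
      ((-(B * exp ((t - s) • B))) j k) s := fun j k => by
    simpa [Function.comp_def] using
      (hasDerivAt_exp_smul_apply B j k (t - s)).comp s ((hasDerivAt_id s).const_sub t)
  have := hasDerivWithinAt_mulVec (S := univ) (v' := 0)
    (fun j k => (hexp j k).hasDerivWithinAt) (fun k => hasDerivWithinAt_const s univ (x k)) i
  simpa [hasDerivWithinAt_univ, mulVec_mulVec, neg_mulVec] using this

theorem dotProduct_mulVec_lyapunov (A Γ Γ' : Matrix n n ℝ) (y : n → ℝ) :
    -(Aᵀ *ᵥ y) ⬝ᵥ (Γ *ᵥ y) + y ⬝ᵥ (Γ' *ᵥ y + Γ *ᵥ -(Aᵀ *ᵥ y)) =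
      y ⬝ᵥ ((Γ' - A * Γ - Γ * Aᵀ) *ᵥ y) := by
  simp only [sub_mulVec, ← mulVec_mulVec, mulVec_neg, dotProduct_add, dotProduct_sub,
    dotProduct_neg, neg_dotProduct, mulVec_transpose, dotProduct_mulVec y A]
  ring

theorem dotProduct_mul_mul_transpose_mulVec [Fintype m] (E : Matrix m n ℝ) (M : Matrix n n ℝ)
    (x : m → ℝ) :
    x ⬝ᵥ ((E * M * Eᵀ) *ᵥ x) = (Eᵀ *ᵥ x) ⬝ᵥ (M *ᵥ (Eᵀ *ᵥ x)) := by
  rw [← mulVec_mulVec, ← mulVec_mulVec, dotProduct_mulVec, ← mulVec_transpose]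

theorem monotoneOn_dotProduct_mulVec_exp [DecidableEq n] {D : Set ℝ} (hD : Convex ℝ D)
    {A : Matrix n n ℝ} {Γ Γ' : ℝ → Matrix n n ℝ}
    (hderiv : ∀ s ∈ D, ∀ i j, HasDerivWithinAt (fun u => Γ u i j) (Γ' s i j) D s)
    (hineq : ∀ s ∈ D, (Γ' s - A * Γ s - Γ s * Aᵀ).PosSemidef) (t : ℝ) (x : n → ℝ) :
    MonotoneOn (fun s => (exp ((t - s) • Aᵀ) *ᵥ x) ⬝ᵥ (Γ s *ᵥ (exp ((t - s) • Aᵀ) *ᵥ x))) D := by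
  set y := fun s => exp ((t - s) • Aᵀ) *ᵥ x
  have hf : ∀ s ∈ D, HasDerivWithinAt (fun s => y s ⬝ᵥ (Γ s *ᵥ y s))
      (y s ⬝ᵥ ((Γ' s - A * Γ s - Γ s * Aᵀ) *ᵥ y s)) D s := by
    intro s hs
    have hy i := (hasDerivAt_exp_sub_smul_mulVec_apply Aᵀ t x s i).hasDerivWithinAt (s := D)
    rw [← dotProduct_mulVec_lyapunov]
    exact hasDerivWithinAt_dotProduct hy (hasDerivWithinAt_mulVec (hderiv s hs) hy)
  refine monotoneOn_of_hasDerivWithinAt_nonneg hD (fun s hs => (hf s hs).continuousWithinAt)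
    (fun s hs => (hf s (interior_subset hs)).mono interior_subset) fun s hs => ?_
  simpa using (hineq s (interior_subset hs)).dotProduct_mulVec_nonneg (y s)

end

/-- If a differentiable symmetric-matrix-valued function `Γ` satisfies
`Γ′(t) ⪰ A Γ(t) + Γ(t) Aᵀ` for all `t ≥ 0`, then
`Γ(t) ⪰ exp(t A) Γ(0) exp(t A)ᵀ` for all `t ≥ 0`. -/
theorem matrix_gronwall (N : ℕ) (A : Matrix (Fin N) (Fin N) ℝ)
    (Γ Γ' : ℝ → Matrix (Fin N) (Fin N) ℝ)
    (hsymm : ∀ t ∈ Set.Ici (0 : ℝ), (Γ t).IsSymm)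
    (hderiv : ∀ t ∈ Set.Ici (0 : ℝ), ∀ i j,
      HasDerivWithinAt (fun s => Γ s i j) (Γ' t i j) (Set.Ici 0) t)
    (hineq : ∀ t ∈ Set.Ici (0 : ℝ), (Γ' t - A * Γ t - Γ t * Aᵀ).PosSemidef) :
    ∀ t ∈ Set.Ici (0 : ℝ),
      (Γ t - NormedSpace.exp (t • A) * Γ 0 * (NormedSpace.exp (t • A))ᵀ).PosSemidef := by
  intro t ht
  have hΓ0 : (Γ 0).IsHermitian := isHermitian_iff_isSymm.2 (hsymm 0 self_mem_Ici)
  refine .of_dotProduct_mulVec_nonneg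
    ((isHermitian_iff_isSymm.2 (hsymm t ht)).sub ?_) fun x => ?_
  · simpa using isHermitian_mul_mul_conjTranspose (exp (t • A)) hΓ0
  · have hmono :=
      monotoneOn_dotProduct_mulVec_exp (convex_Ici 0) hderiv hineq t x self_mem_Ici ht ht
    simp only [sub_zero, sub_self, zero_smul, exp_zero, one_mulVec, ← transpose_smul,
      exp_transpose] at hmono
    rw [star_trivial, sub_mulVec, dotProduct_sub, sub_nonneg, dotProduct_mul_mul_transpose_mulVec]
    exact hmono
end

section
/- Let A be an N×N real matrix and P an N×N real symmetric positive definite matrix such that A P + P Aᵀ is negative definite. Then A is Hurwitz: every complex eigenvalue λ of A satisfies Re(λ) < 0. -/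
/-!
If `w` is a left eigenvector of `A` for `μ`, i.e. `wᴴ A = μ wᴴ`, then
`wᴴ (A P + P Aᴴ) w = 2 Re(μ) · wᴴ P w`, and the two definiteness assumptions force `Re μ < 0`.
A real positive definite `P` stays positive definite over `ℂ`, since for `x = a + i b` the
symmetry of `P` gives `xᴴ P x = aᵀ P a + bᵀ P b`.
-/

open Matrix ComplexConjugate
open scoped ComplexOrder

variable {n : Type*} [Fintype n]

theorem Matrix.exists_vecMul_eq_smul_of_mem_spectrum {K : Type*} [Field K] [DecidableEq n]
    {A : Matrix n n K} {μ : K} (hμ : μ ∈ spectrum K A) : ∃ w ≠ 0, w ᵥ* A = μ • w := by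
  rw [spectrum.mem_iff, isUnit_iff_isUnit_det, isUnit_iff_ne_zero, not_not,
    ← exists_vecMul_eq_zero_iff] at hμ
  obtain ⟨w, hw, hwA⟩ := hμ
  refine ⟨w, hw, ?_⟩
  rwa [vecMul_sub, sub_eq_zero, Algebra.algebraMap_eq_smul_one, vecMul_smul, vecMul_one,
    eq_comm] at hwA

theorem Matrix.re_lt_zero_of_mem_spectrum_of_lyapunov {𝕜 : Type*} [RCLike 𝕜] [DecidableEq n]
    {A P : Matrix n n 𝕜} (hP : P.PosDef) (hL : (-(A * P + P * Aᴴ)).PosDef) {μ : 𝕜}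
    (hμ : μ ∈ spectrum 𝕜 A) : RCLike.re μ < 0 := by
  obtain ⟨w, hw, hwA⟩ := exists_vecMul_eq_smul_of_mem_spectrum hμ
  set x := star w
  have hx : x ≠ 0 := by simpa [x] using hw
  have hAx : Aᴴ *ᵥ x = conj μ • x := by
    rw [← star_star (Aᴴ *ᵥ x), star_mulVec, conjTranspose_conjTranspose, star_star, hwA,
      star_smul]
    rfl
  have hquad : star x ⬝ᵥ (A * P + P * Aᴴ) *ᵥ x = (μ + conj μ) * (star x ⬝ᵥ P *ᵥ x) := by
    rw [add_mulVec, dotProduct_add, ← mulVec_mulVec, ← mulVec_mulVec, hAx,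
      dotProduct_mulVec (star x) A, star_star, hwA, mulVec_smul, dotProduct_smul, smul_dotProduct]
    simp only [smul_eq_mul]
    ring
  have hneg := hL.dotProduct_mulVec_pos hx
  rw [neg_mulVec, dotProduct_neg, hquad, RCLike.add_conj, ← neg_mul] at hneg
  obtain ⟨q, hq, hqx⟩ := RCLike.pos_iff_exists_ofReal.mp (hP.dotProduct_mulVec_pos hx)
  rw [← hqx, ← RCLike.ofReal_ofNat, ← RCLike.ofReal_mul, ← RCLike.ofReal_neg,
    ← RCLike.ofReal_mul, RCLike.ofReal_pos] at hneg
  linarith [pos_of_mul_pos_left hneg hq.le]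

theorem Matrix.IsSymm.star_dotProduct_map_ofReal_mulVec {P : Matrix n n ℝ} (hP : P.IsSymm)
    (x : n → ℂ) :
    star x ⬝ᵥ P.map (↑) *ᵥ x =
      ↑((fun i ↦ (x i).re) ⬝ᵥ P *ᵥ fun i ↦ (x i).re) +
      ↑((fun i ↦ (x i).im) ⬝ᵥ P *ᵥ fun i ↦ (x i).im) := by
  set a : n → ℝ := fun i ↦ (x i).re
  set b : n → ℝ := fun i ↦ (x i).im
  have hsymm : a ⬝ᵥ P *ᵥ b = b ⬝ᵥ P *ᵥ a := by
    rw [dotProduct_mulVec, dotProduct_comm, ← mulVec_transpose, hP.eq]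
  apply Complex.ext
  · simp [dotProduct, mulVec, Complex.mul_re, Finset.mul_sum, ← Finset.sum_add_distrib, a, b]
  · have him : (star x ⬝ᵥ P.map (↑) *ᵥ x).im = a ⬝ᵥ P *ᵥ b - b ⬝ᵥ P *ᵥ a := by
      simp [dotProduct, mulVec, Complex.mul_im, Finset.mul_sum, ← sub_eq_add_neg,
        Finset.sum_sub_distrib, a, b]
    simp [him, hsymm]

theorem Matrix.PosDef.map_ofReal {P : Matrix n n ℝ} (hP : P.PosDef) :
    (P.map ((↑) : ℝ → ℂ)).PosDef := by
  refine .of_dotProduct_mulVec_pos (hP.isHermitian.map _ fun _ ↦ by simp) fun x hx ↦ ?_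
  have hpos {v : n → ℝ} (hv : v ≠ 0) : 0 < v ⬝ᵥ P *ᵥ v := by
    simpa using hP.dotProduct_mulVec_pos hv
  have hnonneg (v : n → ℝ) : 0 ≤ v ⬝ᵥ P *ᵥ v := by
    simpa using hP.posSemidef.dotProduct_mulVec_nonneg v
  rw [(isHermitian_iff_isSymm.mp hP.isHermitian).star_dotProduct_map_ofReal_mulVec,
    ← Complex.ofReal_add, Complex.zero_lt_real]
  by_cases hre : (fun i ↦ (x i).re) = 0
  · have him : (fun i ↦ (x i).im) ≠ 0 := fun him ↦
      hx (funext fun i ↦ Complex.ext (congrFun hre i) (congrFun him i))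
    linarith [hnonneg fun i ↦ (x i).re, hpos him]
  · linarith [hpos hre, hnonneg fun i ↦ (x i).im]

theorem lyapunov_hurwitz_general (N : ℕ) (A : Matrix (Fin N) (Fin N) ℝ)
    (P : Matrix (Fin N) (Fin N) ℝ) (hP : P.PosDef)
    (hLyap : (-(A * P + P * Aᵀ)).PosDef) :
    ∀ μ ∈ spectrum ℂ (A.map Complex.ofReal), μ.re < 0 := by
  intro μ hμ
  have hmap : (-(A * P + P * Aᵀ)).map ((↑) : ℝ → ℂ) =
      -(A.map (↑) * P.map (↑) + P.map (↑) * (A.map ((↑) : ℝ → ℂ))ᴴ) := by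
    ext i j
    simp [Matrix.mul_apply]
  exact re_lt_zero_of_mem_spectrum_of_lyapunov hP.map_ofReal (hmap ▸ hLyap.map_ofReal) hμ

/-- Lyapunov criterion. If `P` is real symmetric positive definite and
`A P + P Aᵀ` is negative definite, then `A` is Hurwitz: every complex eigenvalue `λ` of `A`
satisfies `Re(λ) < 0`. -/
theorem lyapunov_hurwitz (N : ℕ) (A : Matrix (Fin N) (Fin N) ℝ)
    (P : Matrix (Fin N) (Fin N) ℝ) (hPsymm : P.IsSymm) (hP : P.PosDef)
    (hLyap : (-(A * P + P * Aᵀ)).PosDef) :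
    ∀ μ ∈ spectrum ℂ (A.map Complex.ofReal), μ.re < 0 :=
  lyapunov_hurwitz_general N A P hP hLyap
end

section
/- Let A be an N×N real Hurwitz matrix (every complex eigenvalue has negative real part), let M be an N×N real symmetric positive semidefinite matrix, and let P be an N×N real symmetric matrix with A P + P Aᵀ + M ⪯ 0. Suppose Q : [0, ∞) → (N×N real symmetric matrices) is differentiable and satisfies Q′(t) ⪯ A Q(t) + Q(t) Aᵀ + M for all t ≥ 0. Then for every vector v ∈ ℝᴺ, limsup_{t→∞} vᵀ Q(t) v ≤ vᵀ P v; in particular, for every ε > 0 there exists T such that Q(t) ⪯ P + ε·I for all t ≥ T. -/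
/-!
Put `R(t) = Q(t) - P`; the two matrix inequalities combine to `R' ⪯ A R + R Aᵀ`. For fixed `t`
and `v`, along `w(s) = e^{(t-s)Aᵀ} v` the function `s ↦ w(s)ᵀ R(s) w(s)` has derivative
`-wᵀ (A R + R Aᵀ - R') w ≤ 0`, which gives `R(t) ⪯ e^{tA} R(0) e^{tAᵀ}`. As `A` is Hurwitz,
`e^{tA} → 0`: on the generalized eigenspace of an eigenvalue `μ`, `e^{tA}` acts as `e^{tμ}` times
a polynomial in `t`. Hence `R(t) ⪯ ε I` for large `t`. The constant function `-P` satisfies the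
same differential inequality (because `M ⪰ 0`), so the same argument also shows `P ⪰ 0`.
-/

open Matrix Filter NormedSpace Topology Set
open scoped Nat

theorem le_of_forall_pos_le_add_mul {a b c : ℝ} (h : ∀ ε > 0, a ≤ b + ε * c) : a ≤ b := by
  have hc : Continuous fun ε : ℝ => b + ε * c := by fun_prop
  have hlim : Tendsto (fun ε => b + ε * c) (𝓝[>] 0) (𝓝 b) := by
    simpa using (hc.tendsto 0).mono_left nhdsWithin_le_nhds
  exact ge_of_tendsto hlim (eventually_nhdsWithin_of_forall h)

/-- The hypothesis `0 ≤ a` covers the case where `u` is not bounded below along `f`: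
then `limsup u f = 0` by convention. -/
theorem Real.limsup_le_of_forall_eventually_le_add_mul {α : Type*} {f : Filter α} {u : α → ℝ}
    {a c : ℝ} (ha : 0 ≤ a) (h : ∀ ε > 0, ∀ᶠ x in f, u x ≤ a + ε * c) : limsup u f ≤ a := by
  by_cases hf : IsCoboundedUnder (· ≤ ·) f u
  · exact le_of_forall_pos_le_add_mul fun ε hε => limsup_le_of_le hf (h ε hε)
  · rwa [Real.limsup_of_not_isCoboundedUnder hf]

theorem Complex.tendsto_exp_mul_mul_pow_atTop_nhds_zero {μ : ℂ} (hμ : μ.re < 0) (k : ℕ) :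
    Tendsto (fun t : ℝ => Complex.exp (t * μ) * (t : ℂ) ^ k) atTop (𝓝 0) := by
  rw [tendsto_zero_iff_norm_tendsto_zero]
  refine (tendsto_rpow_mul_exp_neg_mul_atTop_nhds_zero k (-μ.re) (by linarith)).congr' ?_
  filter_upwards [eventually_ge_atTop 0] with t ht
  simp [Complex.norm_exp, abs_of_nonneg ht, mul_comm]

section QuadraticForms

variable {n : Type*} [Fintype n]

theorem Matrix.dotProduct_mulVec_le_sum_abs_mul (X : Matrix n n ℝ) (v : n → ℝ) :
    v ⬝ᵥ X *ᵥ v ≤ (∑ i, ∑ j, |X i j|) * (v ⬝ᵥ v) := by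
  have hsq : ∀ i, v i ^ 2 ≤ v ⬝ᵥ v := fun i => by
    simpa [dotProduct, sq] using Finset.single_le_sum (fun j _ => mul_self_nonneg (v j))
      (Finset.mem_univ i)
  have hexpand : v ⬝ᵥ X *ᵥ v = ∑ i, ∑ j, v i * (X i j * v j) := by
    simp [dotProduct, mulVec, Finset.mul_sum]
  rw [hexpand, Finset.sum_mul]
  refine Finset.sum_le_sum fun i _ => ?_
  rw [Finset.sum_mul]
  refine Finset.sum_le_sum fun j _ => ?_
  calc v i * (X i j * v j) ≤ |X i j| * (|v i| * |v j|) := by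
        rw [← abs_mul, ← abs_mul, mul_left_comm]; exact le_abs_self _
    _ ≤ |X i j| * (v ⬝ᵥ v) := by
        gcongr
        nlinarith [two_mul_le_add_sq |v i| |v j|, sq_abs (v i), sq_abs (v j), hsq i, hsq j]

theorem Matrix.eventually_dotProduct_mulVec_le_of_tendsto_zero {α : Type*} {l : Filter α}
    {X : α → Matrix n n ℝ} (hX : Tendsto X l (𝓝 0)) {ε : ℝ} (hε : 0 < ε) :
    ∀ᶠ a in l, ∀ v : n → ℝ, v ⬝ᵥ X a *ᵥ v ≤ ε * (v ⬝ᵥ v) := by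
  have hc : Continuous fun Y : Matrix n n ℝ => ∑ i, ∑ j, |Y i j| := by fun_prop
  have hsum : Tendsto (fun a => ∑ i, ∑ j, |X a i j|) l (𝓝 0) := by
    simpa [Function.comp_def] using (hc.tendsto 0).comp hX
  filter_upwards [hsum.eventually (ge_mem_nhds hε)] with a ha v
  exact (dotProduct_mulVec_le_sum_abs_mul _ v).trans
    (mul_le_mul_of_nonneg_right ha (Finset.sum_nonneg fun i _ => mul_self_nonneg (v i)))

theorem Matrix.hasDerivWithinAt_dotProduct_mulVec {w : ℝ → n → ℝ} {w' : n → ℝ}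
    {S : ℝ → Matrix n n ℝ} {S' : Matrix n n ℝ} {s : Set ℝ} {t : ℝ}
    (hw : HasDerivWithinAt w w' s t)
    (hS : ∀ i j, HasDerivWithinAt (fun u => S u i j) (S' i j) s t) :
    HasDerivWithinAt (fun u => w u ⬝ᵥ S u *ᵥ w u)
      (w' ⬝ᵥ S t *ᵥ w t + w t ⬝ᵥ S' *ᵥ w t + w t ⬝ᵥ S t *ᵥ w') s t := by
  have hwi := hasDerivWithinAt_pi.1 hw
  have h : HasDerivWithinAt (fun u => ∑ i, w u i * ∑ j, S u i j * w u j)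
      (∑ i, (w' i * ∑ j, S t i j * w t j + w t i * ∑ j, (S' i j * w t j + S t i j * w' j)))
      s t :=
    HasDerivWithinAt.fun_sum fun i _ =>
      (hwi i).mul (HasDerivWithinAt.fun_sum fun j _ => (hS i j).mul (hwi j))
  convert h using 1
  · rfl
  · simp only [dotProduct, mulVec, mul_add, Finset.sum_add_distrib, Finset.mul_sum]
    ring_nf

end QuadraticForms

section MatrixExponential

variable {n : Type*} [Fintype n] [DecidableEq n]

theorem Matrix.exp_mulVec_eq_sum_of_pow_mulVec_eq_zero {𝕂 : Type*} [RCLike 𝕂]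
    {C : Matrix n n 𝕂} {x : n → 𝕂} {m : ℕ} (hx : C ^ m *ᵥ x = 0) :
    exp C *ᵥ x = ∑ k ∈ Finset.range m, (k ! : 𝕂)⁻¹ • (C ^ k *ᵥ x) := by
  have hvanish : ∀ k ∉ Finset.range m, (k ! : 𝕂)⁻¹ • (C ^ k *ᵥ x) = 0 := fun k hk => by
    rw [← Nat.sub_add_cancel (not_lt.1 (Finset.mem_range.not.1 hk)), pow_add, ← mulVec_mulVec,
      hx, mulVec_zero, smul_zero]
  open scoped Norms.Operator in
  have hexp := (exp_series_hasSum_exp' (𝕂 := 𝕂) C).map ((mulVecBilin 𝕂 𝕂).flip x)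
    (LinearMap.continuous_of_finiteDimensional _)
  refine hexp.unique ?_
  simpa [Function.comp_def, smul_mulVec] using hasSum_sum_of_ne_finset_zero hvanish

theorem Matrix.tendsto_exp_smul_mulVec_of_mem_maxGenEigenspace {B : Matrix n n ℂ} {μ : ℂ}
    (hμ : μ.re < 0) {y : n → ℂ} (hy : y ∈ Module.End.maxGenEigenspace (toLin' B) μ) :
    Tendsto (fun t : ℝ => exp (t • B) *ᵥ y) atTop (𝓝 0) := by
  obtain ⟨m, hm⟩ := (Module.End.mem_maxGenEigenspace _ μ y).1 hy
  set C := B - μ • (1 : Matrix n n ℂ)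
  have hCm : C ^ m *ᵥ y = 0 := by
    rw [← toLin'_apply, toLin'_pow, map_sub, map_smul, toLin'_one]
    exact hm
  have hexpand : ∀ t : ℝ, exp (t • B) *ᵥ y
      = ∑ k ∈ Finset.range m, (Complex.exp (t * μ) * (t : ℂ) ^ k * (k ! : ℂ)⁻¹) • (C ^ k *ᵥ y) := by
    intro t
    have hsplit : t • B = algebraMap ℂ _ (t * μ) + (t : ℂ) • C := by
      simp [C, Algebra.algebraMap_eq_smul_one, smul_sub, mul_smul]
    have htC : ((t : ℂ) • C) ^ m *ᵥ y = 0 := by rw [smul_pow, smul_mulVec, hCm, smul_zero]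
    have hscalar : exp (algebraMap ℂ (Matrix n n ℂ) (t * μ)) = Complex.exp (t * μ) • 1 := by
      rw [Complex.exp_eq_exp_ℂ, ← Algebra.algebraMap_eq_smul_one]
      open scoped Norms.Operator in exact (algebraMap_exp_comm _).symm
    rw [hsplit, exp_add_of_commute _ _ (Algebra.commute_algebraMap_left _ _), hscalar,
      smul_mul_assoc, one_mul, smul_mulVec, exp_mulVec_eq_sum_of_pow_mulVec_eq_zero htC,
      Finset.smul_sum]
    refine Finset.sum_congr rfl fun k _ => ?_
    rw [smul_pow, smul_mulVec, smul_smul, smul_smul]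
    ring_nf
  simp_rw [hexpand]
  simpa using tendsto_finsetSum (Finset.range m) fun k _ =>
    ((Complex.tendsto_exp_mul_mul_pow_atTop_nhds_zero hμ k).mul_const _).smul_const (C ^ k *ᵥ y)

theorem Matrix.tendsto_exp_smul_mulVec_atTop_nhds_zero {B : Matrix n n ℂ}
    (hB : ∀ μ ∈ spectrum ℂ B, μ.re < 0) (x : n → ℂ) :
    Tendsto (fun t : ℝ => exp (t • B) *ᵥ x) atTop (𝓝 0) := by
  have hx : x ∈ ⨆ μ, Module.End.maxGenEigenspace (toLin' B) μ := by
    rw [Module.End.iSup_maxGenEigenspace_eq_top]; trivial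
  refine Submodule.iSup_induction _
    (motive := fun y => Tendsto (fun t : ℝ => exp (t • B) *ᵥ y) atTop (𝓝 0)) hx
    (fun μ y hy => ?_) (by simp) fun y z hy hz => by simpa [mulVec_add] using hy.add hz
  rcases eq_or_ne y 0 with rfl | hy0
  · simp
  have hμ : Module.End.HasUnifEigenvalue (toLin' B) μ ⊤ := fun h =>
    hy0 ((Submodule.eq_bot_iff _).1 h y hy)
  refine tendsto_exp_smul_mulVec_of_mem_maxGenEigenspace (hB μ ?_) hy
  rw [← spectrum_toLin']
  exact (hμ.lt zero_lt_one).mem_spectrum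

theorem Matrix.tendsto_exp_smul_atTop_nhds_zero {B : Matrix n n ℂ}
    (hB : ∀ μ ∈ spectrum ℂ B, μ.re < 0) :
    Tendsto (fun t : ℝ => exp (t • B)) atTop (𝓝 0) := by
  refine tendsto_pi_nhds.2 fun i => tendsto_pi_nhds.2 fun j => ?_
  simpa [mulVec_single] using
    tendsto_pi_nhds.1 (tendsto_exp_smul_mulVec_atTop_nhds_zero hB (Pi.single j 1)) i

theorem Matrix.tendsto_exp_smul_atTop_nhds_zero_of_map_ofReal {A : Matrix n n ℝ}
    (hA : ∀ μ ∈ spectrum ℂ (A.map Complex.ofReal), μ.re < 0) :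
    Tendsto (fun t : ℝ => exp (t • A)) atTop (𝓝 0) := by
  have hexp : ∀ t : ℝ, exp (t • A) = (exp (t • A.map Complex.ofReal)).map Complex.re := by
    intro t
    have hsmul : t • A.map Complex.ofReal = Complex.ofRealHom.mapMatrix (t • A) := by
      ext i j; simp [Complex.real_smul]
    have hc : Continuous (Complex.ofRealHom.mapMatrix : Matrix n n ℝ →+* Matrix n n ℂ) :=
      continuous_id.matrix_map Complex.continuous_ofReal
    have hmap : exp (Complex.ofRealHom.mapMatrix (t • A))
        = Complex.ofRealHom.mapMatrix (exp (t • A)) :=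
      (open scoped Norms.Operator in map_exp _ hc _).symm
    rw [hsmul, hmap]
    ext i j; simp
  have hre := ((continuous_id.matrix_map Complex.continuous_re).tendsto 0).comp
    (tendsto_exp_smul_atTop_nhds_zero hA)
  simpa [Function.comp_def, ← hexp] using hre

theorem Matrix.hasDerivAt_exp_smul_mulVec {𝕂 : Type*} [RCLike 𝕂] (B : Matrix n n 𝕂)
    (v : n → 𝕂) (s : 𝕂) :
    HasDerivAt (fun s : 𝕂 => exp (s • B) *ᵥ v) (B *ᵥ (exp (s • B) *ᵥ v)) s := by
  rw [mulVec_mulVec]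
  open scoped Norms.Operator in
  exact (LinearMap.toContinuousLinearMap ((mulVecBilin 𝕂 𝕂).flip v)).hasFDerivAt.comp_hasDerivAt
    s (hasDerivAt_exp_smul_const' B s)

theorem Matrix.dotProduct_mulVec_le_exp_conj_of_deriv_le {A : Matrix n n ℝ}
    {R R' : ℝ → Matrix n n ℝ}
    (hR : ∀ t ∈ Ici (0 : ℝ), ∀ i j, HasDerivWithinAt (fun s => R s i j) (R' t i j) (Ici 0) t)
    (hle : ∀ t ∈ Ici (0 : ℝ), (A * R t + R t * Aᵀ - R' t).PosSemidef) {t : ℝ} (ht : 0 ≤ t)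
    (v : n → ℝ) :
    v ⬝ᵥ R t *ᵥ v ≤ v ⬝ᵥ (exp (t • A) * R 0 * (exp (t • A))ᵀ) *ᵥ v := by
  set w : ℝ → n → ℝ := fun s => exp ((t - s) • Aᵀ) *ᵥ v
  have hw : ∀ s, HasDerivAt w (-(Aᵀ *ᵥ w s)) s := fun s => by
    simpa [w, Function.comp_def, mulVec_mulVec] using
      (hasDerivAt_exp_smul_mulVec Aᵀ v (t - s)).scomp s ((hasDerivAt_id s).const_sub t)
  have hf : ∀ s ∈ Ici (0 : ℝ), HasDerivWithinAt (fun s => w s ⬝ᵥ R s *ᵥ w s)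
      (-(w s ⬝ᵥ (A * R s + R s * Aᵀ - R' s) *ᵥ w s)) (Ici 0) s := by
    intro s hs
    convert hasDerivWithinAt_dotProduct_mulVec (hw s).hasDerivWithinAt (hR s hs) using 1
    simp only [sub_mulVec, add_mulVec, dotProduct_add, dotProduct_sub, neg_dotProduct,
      mulVec_neg, dotProduct_neg, ← mulVec_mulVec, mulVec_transpose, dotProduct_mulVec,
      neg_vecMul]
    ring
  have hanti : AntitoneOn (fun s => w s ⬝ᵥ R s *ᵥ w s) (Ici 0) :=
    antitoneOn_of_hasDerivWithinAt_nonpos (convex_Ici 0)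
      (fun s hs => (hf s hs).continuousWithinAt)
      (fun s hs => (hf s (interior_subset hs)).mono interior_subset)
      (fun s hs => neg_nonpos.2 <| by
        simpa using (hle s (interior_subset hs)).dotProduct_mulVec_nonneg (w s))
  have hwt : w t = v := by simp [w]
  have hw0 : w 0 = (exp (t • A))ᵀ *ᵥ v := by simp [w, ← exp_transpose, transpose_smul]
  calc v ⬝ᵥ R t *ᵥ v = w t ⬝ᵥ R t *ᵥ w t := by rw [hwt]
    _ ≤ w 0 ⬝ᵥ R 0 *ᵥ w 0 := hanti self_mem_Ici ht ht
    _ = _ := by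
      rw [hw0, ← mulVec_mulVec, ← mulVec_mulVec, dotProduct_mulVec v, mulVec_transpose]

theorem Matrix.eventually_dotProduct_mulVec_le_of_deriv_le {A : Matrix n n ℝ}
    (hA : Tendsto (fun t : ℝ => exp (t • A)) atTop (𝓝 0)) {R R' : ℝ → Matrix n n ℝ}
    (hR : ∀ t ∈ Ici (0 : ℝ), ∀ i j, HasDerivWithinAt (fun s => R s i j) (R' t i j) (Ici 0) t)
    (hle : ∀ t ∈ Ici (0 : ℝ), (A * R t + R t * Aᵀ - R' t).PosSemidef) {ε : ℝ} (hε : 0 < ε) :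
    ∀ᶠ t in atTop, ∀ v : n → ℝ, v ⬝ᵥ R t *ᵥ v ≤ ε * (v ⬝ᵥ v) := by
  have hX : Tendsto (fun t : ℝ => exp (t • A) * R 0 * (exp (t • A))ᵀ) atTop (𝓝 0) := by
    simpa using (hA.mul_const (R 0)).mul ((continuous_id.matrix_transpose.tendsto 0).comp hA)
  filter_upwards [eventually_dotProduct_mulVec_le_of_tendsto_zero hX hε,
    eventually_ge_atTop (0 : ℝ)] with t hXt ht v
  exact (dotProduct_mulVec_le_exp_conj_of_deriv_le hR hle ht v).trans (hXt v)

end MatrixExponential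

/-- Let `A` be Hurwitz, `M ⪰ 0`, and `P` symmetric with
`A P + P Aᵀ + M ⪯ 0`. If `Q` is a differentiable symmetric-matrix-valued function with
`Q′(t) ⪯ A Q(t) + Q(t) Aᵀ + M` for all `t ≥ 0`, then for every `v`,
`limsup_{t→∞} vᵀ Q(t) v ≤ vᵀ P v`; in particular for every `ε > 0` there is `T` with
`Q(t) ⪯ P + ε I` for all `t ≥ T`. -/
theorem lyapunov_covariance_bound (N : ℕ) (A : Matrix (Fin N) (Fin N) ℝ)
    (hHurwitz : ∀ μ ∈ spectrum ℂ (A.map Complex.ofReal), μ.re < 0)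
    (M : Matrix (Fin N) (Fin N) ℝ) (hM : M.PosSemidef)
    (P : Matrix (Fin N) (Fin N) ℝ) (hPsymm : P.IsSymm)
    (hP : (-(A * P + P * Aᵀ + M)).PosSemidef)
    (Q Q' : ℝ → Matrix (Fin N) (Fin N) ℝ)
    (hQsymm : ∀ t ∈ Set.Ici (0 : ℝ), (Q t).IsSymm)
    (hderiv : ∀ t ∈ Set.Ici (0 : ℝ), ∀ i j,
      HasDerivWithinAt (fun s => Q s i j) (Q' t i j) (Set.Ici 0) t)
    (hineq : ∀ t ∈ Set.Ici (0 : ℝ), (A * Q t + Q t * Aᵀ + M - Q' t).PosSemidef) :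
    (∀ v : Fin N → ℝ, limsup (fun t => v ⬝ᵥ (Q t) *ᵥ v) atTop ≤ v ⬝ᵥ P *ᵥ v)
      ∧ ∀ ε > (0 : ℝ), ∃ T : ℝ, ∀ t ≥ T,
          (P + ε • (1 : Matrix (Fin N) (Fin N) ℝ) - Q t).PosSemidef := by
  have hdecay := tendsto_exp_smul_atTop_nhds_zero_of_map_ofReal hHurwitz
  have hQP : ∀ ε > 0, ∀ᶠ t in atTop, ∀ v, v ⬝ᵥ (Q t - P) *ᵥ v ≤ ε * (v ⬝ᵥ v) :=
    fun ε hε => eventually_dotProduct_mulVec_le_of_deriv_le hdecay (R := fun t => Q t - P)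
      (fun t ht i j => (hderiv t ht i j).sub_const (P i j))
      (fun t ht => by convert (hineq t ht).add hP using 1; noncomm_ring) hε
  have hPnonneg : ∀ v, 0 ≤ v ⬝ᵥ P *ᵥ v := by
    intro v
    refine le_of_forall_pos_le_add_mul (c := v ⬝ᵥ v) fun ε hε => ?_
    obtain ⟨t, ht⟩ := (eventually_dotProduct_mulVec_le_of_deriv_le hdecay (R := fun _ => -P)
      (R' := fun _ => 0) (fun t _ i j => hasDerivWithinAt_const t _ (-P i j))
      (fun t _ => by convert hP.add hM using 1; noncomm_ring) hε).exists
    have hv := ht v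
    rw [neg_mulVec, dotProduct_neg] at hv
    linarith
  refine ⟨fun v => Real.limsup_le_of_forall_eventually_le_add_mul (c := v ⬝ᵥ v) (hPnonneg v)
    fun ε hε => ?_, fun ε hε => ?_⟩
  · filter_upwards [hQP ε hε] with t ht
    simpa [sub_mulVec, add_comm] using ht v
  · obtain ⟨T, hT⟩ := eventually_atTop.1 ((hQP ε hε).and (eventually_ge_atTop 0))
    refine ⟨T, fun t ht => PosSemidef.of_dotProduct_mulVec_nonneg ?_ fun v => ?_⟩
    · exact isHermitian_iff_isSymm.2 ((hPsymm.add (isSymm_one.smul ε)).sub (hQsymm t (hT t ht).2))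
    · simpa [sub_mulVec, add_mulVec, smul_mulVec, add_comm] using (hT t ht).1 v
end
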